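/- The function G(Σ₊, Σ₋, N₁, N₂, N₃) = Σ₊² + Σ₋² + N₁² + N₂² + N₃² - 2N₁N₂ - 2N₂N₃ - 2N₃N₁ is a conserved quantity (first integral) of the flow of the system Σ₊' = 4v(1-Σ²)Σ₊ + S₊, Σ₋' = 4v(1-Σ²)Σ₋ + S₋, Nα' as given, on the level set G = 1: if G = 1 then the derivative of G along the vector field vanishes. -/
import Mathlib


open Real

/-- `G = Σ₊² + Σ₋² + N₁² + N₂² + N₃² - 2N₁N₂ - 2N₂N₃ - 2N₃N₁` is a first integral
of the Hořava–Lifshitz Bianchi system on the level set `G = 1`: if `G = 1`, the derivative of `G`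
along the vector field vanishes. Here `sp = Σ₊`, `sm = Σ₋`. -/
theorem constraint_conserved (v : ℝ) (hv : v ∈ Set.Icc (0:ℝ) 1)
    (sp sm N1 N2 N3 : ℝ)
    (hG : sp ^ 2 + sm ^ 2 + N1 ^ 2 + N2 ^ 2 + N3 ^ 2
            - 2 * N1 * N2 - 2 * N2 * N3 - 2 * N3 * N1 = 1) :
    (let S2 := sp ^ 2 + sm ^ 2
     let Sp := 2 * ((N3 - N2) ^ 2 - N1 * (2 * N1 - N2 - N3))
     let Sm := 2 * Real.sqrt 3 * (N3 - N2) * (N1 - N2 - N3)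
     let dsp := 4 * v * (1 - S2) * sp + Sp
     let dsm := 4 * v * (1 - S2) * sm + Sm
     let dN1 := -2 * (2 * v * S2 - 2 * sp) * N1
     let dN2 := -2 * (2 * v * S2 + sp + Real.sqrt 3 * sm) * N2
     let dN3 := -2 * (2 * v * S2 + sp - Real.sqrt 3 * sm) * N3
     -- derivative of G along the vector field
     2 * sp * dsp + 2 * sm * dsm + 2 * N1 * dN1 + 2 * N2 * dN2 + 2 * N3 * dN3
       - 2 * (dN1 * N2 + N1 * dN2) - 2 * (dN2 * N3 + N2 * dN3) - 2 * (dN3 * N1 + N3 * dN1)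
       = 0) := by
  simp only []
  linear_combination (-8)*v*(sp^2+sm^2)*hG
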